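/- W_2 is not a magic monotone under mixed unital Clifford channels: for the single-qubit pure state |ψ⟩ = cos(π/16)|0⟩ + sin(π/16)|1⟩ with ρ = |ψ⟩⟨ψ|, and the channel Γ(ρ) = (1/2)ρ + (1/2) H ρ H where H is the Hadamard gate, one has W_2(Γ(ρ)) > W_2(ρ), i.e. W_2 strictly increases under this mixed unital Clifford channel. -/

import Mathlib

open Matrix Complex BigOperators
open scoped ComplexOrder

noncomputable section

/-- Index type for `n` qubits: functions `Fin n → Fin 2` (cardinality `2^n`). -/
abbrev QIdx (n : ℕ) := Fin n → Fin 2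

/-- The four single-qubit Pauli matrices: `σ⁰ = I`, `σ¹ = σˣ`, `σ² = σᶻ`, `σ³ = σʸ`. -/
def pauliMat : Fin 4 → Matrix (Fin 2) (Fin 2) ℂ
  | 0 => 1
  | 1 => !![0, 1; 1, 0]
  | 2 => !![1, 0; 0, -1]
  | 3 => !![0, -Complex.I; Complex.I, 0]

/-- The Pauli string `σ^{a_1} ⊗ ⋯ ⊗ σ^{a_n}` as a `2^n × 2^n` matrix. -/
def pauliString {n : ℕ} (a : Fin n → Fin 4) : Matrix (QIdx n) (QIdx n) ℂ :=
  fun i j => ∏ k, pauliMat (a k) (i k) (j k)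

/-- An `n`-qubit state: positive semidefinite with unit trace. -/
def IsState {n : ℕ} (ρ : Matrix (QIdx n) (QIdx n) ℂ) : Prop :=
  ρ.PosSemidef ∧ ρ.trace = 1

/-- The `α`-moment of the Pauli spectrum `A_α(ρ) = 2^{-n} ∑_P |tr(ρP)|^{2α}`. -/
def Amom {n : ℕ} (α : ℝ) (ρ : Matrix (QIdx n) (QIdx n) ℂ) : ℝ :=
  ((2:ℝ)^n)⁻¹ * ∑ a : Fin n → Fin 4, ‖(ρ * pauliString a).trace‖ ^ (2 * α)

/-- The 2-Rényi entropy `S₂(ρ) = -ln tr(ρ²)`. -/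
def S2 {n : ℕ} (ρ : Matrix (QIdx n) (QIdx n) ℂ) : ℝ :=
  - Real.log ((ρ * ρ).trace.re)

/-- The magic witness `W_α(ρ) = (1/(1-α)) ln A_α(ρ) - ((1-2α)/(1-α)) S₂(ρ)`. -/
def Wit {n : ℕ} (α : ℝ) (ρ : Matrix (QIdx n) (QIdx n) ℂ) : ℝ :=
  (1 / (1 - α)) * Real.log (Amom α ρ) - ((1 - 2*α)/(1 - α)) * S2 ρ

/-- The stabilizer norm `D(ρ) = A_{1/2}(ρ) = 2^{-n} ∑_P |tr(ρP)|`. -/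
def Dnorm {n : ℕ} (ρ : Matrix (QIdx n) (QIdx n) ℂ) : ℝ :=
  Amom (1/2) ρ

/-- A Clifford unitary: unitary mapping every Pauli string to `±` a Pauli string. -/
def IsCliffordUnitary {n : ℕ} (U : Matrix (QIdx n) (QIdx n) ℂ) : Prop :=
  U ∈ Matrix.unitaryGroup (QIdx n) ℂ ∧
    ∀ a : Fin n → Fin 4, ∃ (b : Fin n → Fin 4) (ε : ℝ),
      (ε = 1 ∨ ε = -1) ∧ U * pauliString a * Uᴴ = (ε : ℂ) • pauliString b

/-- The computational all-zeros basis vector `|0⟩^{⊗n}`. -/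
def zeroVec (n : ℕ) : QIdx n → ℂ :=
  fun i => if (∀ k, i k = 0) then 1 else 0

/-- A pure stabilizer state vector: `U|0⟩^{⊗n}` for a Clifford unitary `U`. -/
def IsPureStab {n : ℕ} (ψ : QIdx n → ℂ) : Prop :=
  ∃ U, IsCliffordUnitary U ∧ ψ = U.mulVec (zeroVec n)

/-- The rank-one projector `|ψ⟩⟨ψ|`. -/
def proj {n : ℕ} (ψ : QIdx n → ℂ) : Matrix (QIdx n) (QIdx n) ℂ :=
  Matrix.vecMulVec ψ (star ψ)

/-- A mixed stabilizer state: a finite convex combination of pure stabilizer projectors. -/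
def IsMixedStab {n : ℕ} (ρ : Matrix (QIdx n) (QIdx n) ℂ) : Prop :=
  ∃ (k : ℕ) (p : Fin k → ℝ) (ψ : Fin k → QIdx n → ℂ),
    (∀ i, 0 ≤ p i) ∧ (∑ i, p i = 1) ∧ (∀ i, IsPureStab (ψ i)) ∧
    ρ = ∑ i, (p i : ℂ) • proj (ψ i)

/-- The set of values `ln ∑ᵢ |xᵢ|` over finite real stabilizer decompositions of `ρ`. -/
def StabDecomps {n : ℕ} (ρ : Matrix (QIdx n) (QIdx n) ℂ) : Set ℝ :=
  { r | ∃ (k : ℕ) (x : Fin k → ℝ) (ψ : Fin k → QIdx n → ℂ),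
      (∀ i, IsPureStab (ψ i)) ∧ ρ = ∑ i, (x i : ℂ) • proj (ψ i) ∧
      r = Real.log (∑ i, |x i|) }

/-- The log-free robustness of magic. -/
def LR {n : ℕ} (ρ : Matrix (QIdx n) (QIdx n) ℂ) : ℝ := sInf (StabDecomps ρ)

open Classical in
/-- Positive-semidefinite square root (junk value `0` off the PSD cone). -/
def psdSqrt {n : ℕ} (A : Matrix (QIdx n) (QIdx n) ℂ) : Matrix (QIdx n) (QIdx n) ℂ :=
  if h : A.PosSemidef then
    h.1.eigenvectorUnitary.1 * diagonal ((↑) ∘ (√·) ∘ h.1.eigenvalues) *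
      (star h.1.eigenvectorUnitary : Matrix (QIdx n) (QIdx n) ℂ)
  else 0

/-- The Uhlmann fidelity `F(ρ,σ) = (tr √(√ρ σ √ρ))²`. -/
def fidelity {n : ℕ} (ρ σ : Matrix (QIdx n) (QIdx n) ℂ) : ℝ :=
  ((psdSqrt (psdSqrt ρ * σ * psdSqrt ρ)).trace.re) ^ 2

/-- The stabilizer fidelity `D_F(ρ) = inf { -ln F(ρ,σ) : σ a mixed stabilizer state }`. -/
def DF {n : ℕ} (ρ : Matrix (QIdx n) (QIdx n) ℂ) : ℝ :=
  sInf { r | ∃ σ, IsMixedStab σ ∧ r = - Real.log (fidelity ρ σ) }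

/-- Filtered Pauli moment `Ã_α(ρ) = (2^n A_α(ρ) - 1)/(2^n - 1)`. -/
def Atil {n : ℕ} (α : ℝ) (ρ : Matrix (QIdx n) (QIdx n) ℂ) : ℝ :=
  ((2:ℝ)^n * Amom α ρ - 1) / ((2:ℝ)^n - 1)

/-- Filtered stabilizer norm `D̃(ρ) = (2^n D(ρ) - 1)/(2^n - 1)`. -/
def Dtil {n : ℕ} (ρ : Matrix (QIdx n) (QIdx n) ℂ) : ℝ :=
  ((2:ℝ)^n * Dnorm ρ - 1) / ((2:ℝ)^n - 1)

/-- Filtered magic witness `W̃_α(ρ) = (1/(1-α)) ln Ã_α(ρ) + ((1-2α)/(1-α)) ln Ã₁(ρ)`. -/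
def Wtil {n : ℕ} (α : ℝ) (ρ : Matrix (QIdx n) (QIdx n) ℂ) : ℝ :=
  (1/(1-α)) * Real.log (Atil α ρ) + ((1 - 2*α)/(1-α)) * Real.log (Atil 1 ρ)

/-- The maximally mixed state `I/2^n`. -/
def maxMixed (n : ℕ) : Matrix (QIdx n) (QIdx n) ℂ := ((2:ℂ)^n)⁻¹ • 1

/-- The single-qubit T-state vector `|T⟩ = (|0⟩ + e^{-iπ/4}|1⟩)/√2`. -/
def Tket : QIdx 1 → ℂ :=
  fun i => if i 0 = 0 then (Real.sqrt 2 : ℂ)⁻¹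
           else Complex.exp (-(Real.pi/4 : ℂ) * Complex.I) * (Real.sqrt 2 : ℂ)⁻¹

/-- The depolarized T-state `ρ_p = (1-p)|T⟩⟨T| + p·I₂/2`. -/
def rhoDep (p : ℝ) : Matrix (QIdx 1) (QIdx 1) ℂ :=
  ((1 - p : ℝ) : ℂ) • proj Tket + ((p : ℝ) : ℂ) • (((2:ℂ))⁻¹ • 1)


/-- The single-qubit pure state `|ψ⟩ = cos(π/16)|0⟩ + sin(π/16)|1⟩`. -/
def psi16 : QIdx 1 → ℂ :=
  fun i => if i 0 = 0 then (Real.cos (Real.pi/16) : ℂ) else (Real.sin (Real.pi/16) : ℂ)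

/-- The Hadamard gate `H = (σˣ + σᶻ)/√2` on one qubit. -/
def Had : Matrix (QIdx 1) (QIdx 1) ℂ :=
  ((Real.sqrt 2 : ℂ))⁻¹ •
    (pauliString (fun _ => (1 : Fin 4)) + pauliString (fun _ => (2 : Fin 4)))

/-! A single-qubit state is determined by its Bloch vector `r`, through `ρ = (I + r·σ)/2`.
Then `tr ρ² = (1 + |r|²)/2` and `A₂(ρ) = (1 + Σ rᵢ⁴)/2`, so `W₂` is an explicit function of `r`.
The state `ψ` has `r = (sin(π/8), 0, cos(π/8))`, whence `W₂(ρ) = ln(8/7)`. Conjugation by the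
Hadamard gate swaps the `x` and `z` components and negates `y`, so `Γ(ρ)` has Bloch vector
`(w, 0, w)` with `w² = (2 + √2)/8`, giving `W₂(Γ(ρ)) = 3 ln((6 + √2)/8) - ln((19 + 2√2)/32)`,
which exceeds `ln(8/7)` because `√2 > 1.3`. -/

open scoped Real

namespace Qubit

abbrev ofFin2 : Matrix (Fin 2) (Fin 2) ℂ ≃ₐ[ℂ] Matrix (QIdx 1) (QIdx 1) ℂ :=
  reindexAlgEquiv ℂ ℂ (Equiv.funUnique (Fin 1) (Fin 2)).symm

lemma trace_ofFin2 (M : Matrix (Fin 2) (Fin 2) ℂ) : (ofFin2 M).trace = M.trace := by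
  simp only [trace, diag, coe_reindexAlgEquiv, reindex_apply, submatrix_apply, Equiv.symm_symm]
  exact (Equiv.funUnique (Fin 1) (Fin 2)).sum_comp fun i => M i i

lemma pauliString_const (a : Fin 4) :
    pauliString (fun _ : Fin 1 => a) = ofFin2 (pauliMat a) := by
  ext i j
  simp [pauliString]

lemma sum_pauli_const {M : Type*} [AddCommMonoid M] (f : (Fin 1 → Fin 4) → M) :
    ∑ a, f a = ∑ b : Fin 4, f (fun _ => b) :=
  ((Equiv.funUnique (Fin 1) (Fin 4)).symm.sum_comp f).symm

/-- `(I + x σˣ + y σʸ + z σᶻ) / 2`. -/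
def blochMat (x y z : ℝ) : Matrix (Fin 2) (Fin 2) ℂ :=
  !![(1 + z) / 2, (x - y * I) / 2; (x + y * I) / 2, (1 - z) / 2]

lemma trace_blochMat_mul_pauliMat (x y z : ℝ) (a : Fin 4) :
    (blochMat x y z * pauliMat a).trace = ((![1, x, z, y] a : ℝ) : ℂ) := by
  fin_cases a <;> simp [blochMat, pauliMat, trace_fin_two] <;> ring_nf
  simp

lemma re_trace_blochMat_mul_self (x y z : ℝ) :
    (blochMat x y z * blochMat x y z).trace.re = (1 + x ^ 2 + y ^ 2 + z ^ 2) / 2 := by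
  simp [blochMat, trace_fin_two]
  ring

lemma amom_ofFin2_blochMat (α x y z : ℝ) :
    Amom α (ofFin2 (blochMat x y z)) =
      (1 + |x| ^ (2 * α) + |y| ^ (2 * α) + |z| ^ (2 * α)) / 2 := by
  simp only [Amom, sum_pauli_const, pauliString_const, ← map_mul, trace_ofFin2,
    trace_blochMat_mul_pauliMat, Fin.sum_univ_four, Complex.norm_real, Real.norm_eq_abs]
  simp
  ring

lemma wit_two_eq {n : ℕ} (ρ : Matrix (QIdx n) (QIdx n) ℂ) :
    Wit 2 ρ = 3 * Real.log (ρ * ρ).trace.re - Real.log (Amom 2 ρ) := by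
  rw [Wit, S2]
  ring

lemma wit_two_ofFin2_blochMat (x y z : ℝ) :
    Wit 2 (ofFin2 (blochMat x y z)) =
      3 * Real.log ((1 + x ^ 2 + y ^ 2 + z ^ 2) / 2) -
        Real.log ((1 + x ^ 4 + y ^ 4 + z ^ 4) / 2) := by
  have abs_rpow_four (t : ℝ) : |t| ^ (2 * 2 : ℝ) = t ^ 4 := by
    rw [show (2 * 2 : ℝ) = (4 : ℕ) by norm_num, Real.rpow_natCast, Even.pow_abs ⟨2, rfl⟩]
  rw [wit_two_eq, ← map_mul, trace_ofFin2, re_trace_blochMat_mul_self, amom_ofFin2_blochMat,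
    abs_rpow_four, abs_rpow_four, abs_rpow_four]

lemma proj_cos_sin (t : ℝ) :
    proj (fun i : QIdx 1 => if i 0 = 0 then (Real.cos t : ℂ) else (Real.sin t : ℂ)) =
      ofFin2 (blochMat (Real.sin (2 * t)) 0 (Real.cos (2 * t))) := by
  ext i j
  simp only [proj, vecMulVec_apply, Pi.star_apply, coe_reindexAlgEquiv, reindex_apply,
    submatrix_apply, Equiv.symm_symm, Equiv.funUnique_apply]
  generalize i default = a
  generalize j default = b
  fin_cases a <;> fin_cases b <;>
    simp [blochMat, ← Complex.cos_conj, ← Complex.sin_conj, Complex.sin_two_mul,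
      Complex.cos_two_mul]
  · ring
  · ring
  · ring
  · linear_combination Complex.sin_sq_add_cos_sq (t : ℂ)

lemma had_eq_ofFin2 : Had = ofFin2 ((√2 : ℂ)⁻¹ • (pauliMat 1 + pauliMat 2)) := by
  rw [Had, pauliString_const, pauliString_const, map_smul, map_add]

lemma hadamard_conj_blochMat (x y z : ℝ) :
    (√2 : ℂ)⁻¹ • (pauliMat 1 + pauliMat 2) * blochMat x y z *
        ((√2 : ℂ)⁻¹ • (pauliMat 1 + pauliMat 2)) = blochMat z (-y) x := by
  have h : ((√2 : ℂ)⁻¹) ^ 2 = 2⁻¹ := by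
    rw [inv_pow, ← Complex.ofReal_pow, Real.sq_sqrt zero_le_two]; norm_num
  rw [smul_mul_assoc, mul_smul_comm, smul_mul_assoc, smul_smul, ← sq, h]
  ext i j
  fin_cases i <;> fin_cases j <;> simp [blochMat, pauliMat] <;> ring

lemma had_mul_mul_had (x y z : ℝ) :
    Had * ofFin2 (blochMat x y z) * Had = ofFin2 (blochMat z (-y) x) := by
  rw [had_eq_ofFin2, ← map_mul, ← map_mul, hadamard_conj_blochMat]

lemma midpoint_blochMat (x y z x' y' z' : ℝ) :
    (2 : ℂ)⁻¹ • blochMat x y z + (2 : ℂ)⁻¹ • blochMat x' y' z' =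
      blochMat ((x + x') / 2) ((y + y') / 2) ((z + z') / 2) := by
  ext i j
  fin_cases i <;> fin_cases j <;> simp [blochMat] <;> ring

lemma half_add_half_had_conj (x y z : ℝ) :
    (2 : ℂ)⁻¹ • ofFin2 (blochMat x y z) +
        (2 : ℂ)⁻¹ • (Had * ofFin2 (blochMat x y z) * Had) =
      ofFin2 (blochMat ((x + z) / 2) 0 ((x + z) / 2)) := by
  rw [had_mul_mul_had, ← map_smul, ← map_smul, ← map_add, midpoint_blochMat]
  congr 2 <;> ring

lemma wit_two_blochMat_of_mul_eq {s c : ℝ} (hsq : s ^ 2 + c ^ 2 = 1) (hmul : s * c = √2 / 4) :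
    Wit 2 (ofFin2 (blochMat s 0 c)) = -Real.log (7 / 8) := by
  have h2 : √2 ^ 2 = 2 := Real.sq_sqrt zero_le_two
  have hP : (1 + s ^ 2 + 0 ^ 2 + c ^ 2) / 2 = 1 := by linear_combination hsq / 2
  have hA : (1 + s ^ 4 + 0 ^ 4 + c ^ 4) / 2 = 7 / 8 := by
    linear_combination ((s ^ 2 + c ^ 2 + 1) * hsq - 2 * (s * c + √2 / 4) * hmul - h2 / 8) / 2
  rw [wit_two_ofFin2_blochMat, hP, hA, Real.log_one, mul_zero, zero_sub]

lemma wit_two_blochMat_average_of_mul_eq {s c : ℝ} (hsq : s ^ 2 + c ^ 2 = 1)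
    (hmul : s * c = √2 / 4) :
    Wit 2 (ofFin2 (blochMat ((s + c) / 2) 0 ((s + c) / 2))) =
      3 * Real.log ((6 + √2) / 8) - Real.log ((19 + 2 * √2) / 32) := by
  have h2 : √2 ^ 2 = 2 := Real.sq_sqrt zero_le_two
  have hw : ((s + c) / 2) ^ 2 = (2 + √2) / 8 := by linear_combination hsq / 4 + hmul / 2
  have hP : (1 + ((s + c) / 2) ^ 2 + 0 ^ 2 + ((s + c) / 2) ^ 2) / 2 = (6 + √2) / 8 := by
    linear_combination hw
  have hA : (1 + ((s + c) / 2) ^ 4 + 0 ^ 4 + ((s + c) / 2) ^ 4) / 2 = (19 + 2 * √2) / 32 := by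
    linear_combination (((s + c) / 2) ^ 2 + (2 + √2) / 8) * hw + h2 / 64
  rw [wit_two_ofFin2_blochMat, hP, hA]

end Qubit

lemma sin_mul_cos_pi_div_eight : Real.sin (π / 8) * Real.cos (π / 8) = √2 / 4 := by
  have h := Real.sin_two_mul (π / 8)
  rw [show 2 * (π / 8) = π / 4 by ring, Real.sin_pi_div_four] at h
  linarith

lemma neg_log_seven_eighths_lt :
    -Real.log (7 / 8) < 3 * Real.log ((6 + √2) / 8) - Real.log ((19 + 2 * √2) / 32) := by
  have h2 : √2 ^ 2 = 2 := Real.sq_sqrt zero_le_two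
  have hlb : (1.3 : ℝ) < √2 := by
    rw [Real.lt_sqrt (by norm_num)]; norm_num
  rw [← Real.log_inv, show 3 * Real.log ((6 + √2) / 8) = Real.log (((6 + √2) / 8) ^ 3) by
    rw [Real.log_pow]; norm_num, ← Real.log_div (by positivity) (by positivity)]
  apply Real.log_lt_log (by norm_num)
  rw [lt_div_iff₀ (by positivity)]
  nlinarith

lemma proj_psi16 :
    proj psi16 = Qubit.ofFin2 (Qubit.blochMat (Real.sin (π / 8)) 0 (Real.cos (π / 8))) := by
  rw [show π / 8 = 2 * (π / 16) by ring]
  exact Qubit.proj_cos_sin (π / 16)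

open Qubit

/-- `W₂` is not a magic monotone: it strictly increases under the
mixed unital Clifford channel `Γ(ρ) = ρ/2 + HρH/2` applied to
`|ψ⟩ = cos(π/16)|0⟩ + sin(π/16)|1⟩`. -/
theorem W2_not_monotone :
    Wit 2 ((2:ℂ)⁻¹ • proj psi16 + (2:ℂ)⁻¹ • (Had * proj psi16 * Had)) >
      Wit 2 (proj psi16) := by
  have hsq := Real.sin_sq_add_cos_sq (π / 8)
  rw [proj_psi16, half_add_half_had_conj,
    wit_two_blochMat_of_mul_eq hsq sin_mul_cos_pi_div_eight,
    wit_two_blochMat_average_of_mul_eq hsq sin_mul_cos_pi_div_eight]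
  exact neg_log_seven_eighths_lt
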